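/- arXiv:1606.01869 — 5 statements merged into one kernel-verified Lean document; each statement's English description precedes it below -/
import Mathlib

section
/- Lemma (eigengap of the population kernel matrix): let f(x) = exp(−ηx) with η > 0, suppose the means μ_1,…,μ_r ∈ ℝ^p are pairwise distinct, and let B ∈ ℝ^{r×r} be the matrix with B_{kℓ} = exp(−η·d_{kℓ}²). Then λ_r(K̃) − λ_{r+1}(K̃) ≥ (n/r)·λ_min(B)·min_k exp(−2ησ_k²) − 2·max_k (1 − exp(−2ησ_k²)). -/
open Matrix

/-- The eigenvalues of a Hermitian matrix, listed in nonincreasing order: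
`eigDesc hM i` is the `(i+1)`-th largest eigenvalue of `M`. -/
noncomputable def eigDesc {n : ℕ} {M : Matrix (Fin n) (Fin n) ℝ} (hM : M.IsHermitian)
    (i : Fin n) : ℝ :=
  hM.eigenvalues (Tuple.sort hM.eigenvalues i.rev)

/-!
Write `K̃ = Z S B S Zᵀ + D`, where `Z` is the membership matrix, `S = diag (exp (-η σ_k²))` and
`D = diag (1 - exp (-2η σ_{z i}²))`, so that `0 ≤ D ≤ δ := max_k (1 - exp (-2η σ_k²))`.
Since `ZᵀZ = (n/r) • 1`, the quadratic form of `K̃` on the `r`-dimensional range of `Z` is at least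
`(n/r) λ_min(B) min_k exp (-2η σ_k²)` times the squared norm, while on `ker Zᵀ`, of dimension
at least `n - r`, it reduces to that of `D`, hence is at most `δ` times the squared norm.
Courant–Fischer turns these bounds into `λ_r(K̃) ≥ (n/r) λ_min(B) min_k exp (-2η σ_k²)` and
`λ_{r+1}(K̃) ≤ δ`. If `λ_min(B) < 0` the claim is trivial, the eigenvalues being sorted.
-/

open Finset
open scoped RealInnerProductSpace

namespace OrthonormalBasis

variable {ι E : Type*} [Fintype ι] [NormedAddCommGroup E] [InnerProductSpace ℝ E]
  {T : E →ₗ[ℝ] E} {lam : ι → ℝ}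

theorem inner_apply_self_eq_sum (b : OrthonormalBasis ι ℝ E) (hb : ∀ j, T (b j) = lam j • b j)
    (x : E) : ⟪x, T x⟫ = ∑ j, lam j * ⟪b j, x⟫ ^ 2 := by
  have hTx : T x = ∑ j, (lam j * ⟪b j, x⟫) • b j := by
    conv_lhs => rw [← b.sum_repr' x]
    simp only [map_sum, map_smul, hb, smul_smul, mul_comm]
  simp only [hTx, inner_sum, real_inner_smul_right, real_inner_comm x, sq, mul_assoc]

/-- `u ↦ (⟪b j, u⟫)_{a ≤ lam j}` is injective on `U`: a nonzero vector orthogonal to all these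
eigenvectors has quadratic form `< a ‖u‖²`. -/
theorem finrank_le_card_of_le_inner (b : OrthonormalBasis ι ℝ E)
    (hb : ∀ j, T (b j) = lam j • b j) {U : Submodule ℝ E} {a : ℝ}
    (hU : ∀ u ∈ U, a * ‖u‖ ^ 2 ≤ ⟪u, T u⟫) :
    Module.finrank ℝ U ≤ #{j | a ≤ lam j} := by
  classical
  let φ : U →ₗ[ℝ] ({j // a ≤ lam j} → ℝ) :=
    LinearMap.pi fun j => innerₛₗ ℝ (b j.1) ∘ₗ U.subtype
  have hφ : Function.Injective φ := by
    rw [← LinearMap.ker_eq_bot, eq_bot_iff]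
    rintro ⟨u, hu⟩ hφu
    have hhigh : ∀ j, a ≤ lam j → ⟪b j, u⟫ = 0 := fun j hj => congrFun hφu ⟨j, hj⟩
    have hterm : ∀ j ∈ univ, (lam j - a) * ⟪b j, u⟫ ^ 2 ≤ 0 := by
      intro j _
      rcases le_or_gt a (lam j) with hj | hj
      · simp [hhigh j hj]
      · exact mul_nonpos_of_nonpos_of_nonneg (by linarith) (sq_nonneg _)
    have hsum : 0 ≤ ∑ j, (lam j - a) * ⟪b j, u⟫ ^ 2 := by
      have := hU u hu
      rw [b.inner_apply_self_eq_sum hb, ← b.sum_sq_inner_right, mul_sum] at this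
      simpa [sub_mul, sum_sub_distrib] using this
    have hzero := (sum_eq_zero_iff_of_nonpos hterm).mp (le_antisymm (sum_nonpos hterm) hsum)
    have hall : ∀ j, ⟪b j, u⟫ = 0 := by
      intro j
      rcases le_or_gt a (lam j) with hj | hj
      · exact hhigh j hj
      · simpa [(sub_neg.mpr hj).ne] using hzero j (mem_univ j)
    have hu0 : u = 0 := by rw [← b.sum_repr' u]; simp [hall]
    simpa using hu0
  calc Module.finrank ℝ U ≤ Module.finrank ℝ ({j // a ≤ lam j} → ℝ) :=
        LinearMap.finrank_le_finrank_of_injective hφ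
    _ = #{j | a ≤ lam j} := by simp [Fintype.card_subtype]

theorem finrank_le_card_of_inner_le (b : OrthonormalBasis ι ℝ E)
    (hb : ∀ j, T (b j) = lam j • b j) {W : Submodule ℝ E} {c : ℝ}
    (hW : ∀ w ∈ W, ⟪w, T w⟫ ≤ c * ‖w‖ ^ 2) :
    Module.finrank ℝ W ≤ #{j | lam j ≤ c} := by
  have h := b.finrank_le_card_of_le_inner (T := -T) (lam := -lam) (a := -c)
    (fun j => by simp [hb]) (fun w hw => by simpa [inner_neg_right] using hW w hw)
  simpa using h

end OrthonormalBasis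

theorem EuclideanSpace.norm_toLp_sq {κ : Type*} [Fintype κ] (x : κ → ℝ) :
    ‖WithLp.toLp 2 x‖ ^ 2 = x ⬝ᵥ x := by
  rw [← real_inner_self_eq_norm_sq, EuclideanSpace.inner_toLp_toLp, star_trivial]

namespace Matrix

variable {ι κ : Type*} [Fintype ι] [Fintype κ]

theorem IsHermitian.toEuclideanLin_eigenvectorBasis [DecidableEq κ] {B : Matrix κ κ ℝ}
    (hB : B.IsHermitian) (j : κ) :
    toEuclideanLin B (hB.eigenvectorBasis j) = hB.eigenvalues j • hB.eigenvectorBasis j := by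
  ext1
  simp [hB.mulVec_eigenvectorBasis]

theorem IsHermitian.mul_dotProduct_self_le [DecidableEq κ] {B : Matrix κ κ ℝ}
    (hB : B.IsHermitian) {a : ℝ} (ha : ∀ j, a ≤ hB.eigenvalues j) (v : κ → ℝ) :
    a * (v ⬝ᵥ v) ≤ v ⬝ᵥ B *ᵥ v := by
  have hquad := hB.eigenvectorBasis.inner_apply_self_eq_sum hB.toEuclideanLin_eigenvectorBasis
    (WithLp.toLp 2 v)
  have hnorm := hB.eigenvectorBasis.sum_sq_inner_right (WithLp.toLp 2 v)
  simp only [toLpLin_toLp, toLin'_apply, EuclideanSpace.inner_toLp_toLp, star_trivial,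
    EuclideanSpace.norm_toLp_sq] at hquad hnorm
  rw [dotProduct_comm v (B *ᵥ v), hquad, ← hnorm, mul_sum]
  exact sum_le_sum fun j _ => mul_le_mul_of_nonneg_right (ha j) (sq_nonneg _)

theorem IsHermitian.mul_mul_dotProduct_le_diagonal_mul_mul_diagonal [DecidableEq κ]
    {B : Matrix κ κ ℝ} (hB : B.IsHermitian) {a m : ℝ} (ha : ∀ j, a ≤ hB.eigenvalues j)
    (ha0 : 0 ≤ a) {s : κ → ℝ} (hs : ∀ k, m ≤ s k ^ 2) (y : κ → ℝ) :
    a * m * (y ⬝ᵥ y) ≤ y ⬝ᵥ (diagonal s * B * diagonal s) *ᵥ y := by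
  rw [← mulVec_mulVec, ← mulVec_mulVec, dotProduct_mulVec, ← mulVec_transpose,
    diagonal_transpose]
  have hscaled : m * (y ⬝ᵥ y) ≤ diagonal s *ᵥ y ⬝ᵥ diagonal s *ᵥ y := by
    simp only [dotProduct, mulVec_diagonal, mul_sum]
    exact sum_le_sum fun k _ => by nlinarith [hs k, mul_self_nonneg (y k)]
  calc a * m * (y ⬝ᵥ y) ≤ a * (diagonal s *ᵥ y ⬝ᵥ diagonal s *ᵥ y) := by
        rw [mul_assoc]; exact mul_le_mul_of_nonneg_left hscaled ha0
    _ ≤ _ := hB.mul_dotProduct_self_le ha _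

theorem rank_eq_card_of_transpose_mul_self_eq_smul [DecidableEq κ] {A : Matrix ι κ ℝ} {m : ℝ}
    (hm : m ≠ 0) (hA : Aᵀ * A = m • 1) : A.rank = Fintype.card κ := by
  rw [← rank_transpose_mul_self, hA,
    rank_smul_of_mem_nonZeroDivisors _ (mem_nonZeroDivisors_of_ne_zero hm), rank_one]

theorem card_le_card_add_finrank_ker_mulVecLin (A : Matrix κ ι ℝ) :
    Fintype.card ι ≤ Fintype.card κ + Module.finrank ℝ (LinearMap.ker A.mulVecLin) := by
  have hsum := A.mulVecLin.finrank_range_add_finrank_ker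
  have hrank := A.rank_le_card_height
  rw [Module.finrank_fintype_fun_eq_card] at hsum
  rw [rank] at hrank
  omega

theorem dotProduct_mul_mul_transpose_mulVec (A : Matrix ι κ ℝ) (G : Matrix κ κ ℝ)
    (x : ι → ℝ) : x ⬝ᵥ (A * G * Aᵀ) *ᵥ x = (Aᵀ *ᵥ x) ⬝ᵥ G *ᵥ (Aᵀ *ᵥ x) := by
  rw [← mulVec_mulVec, ← mulVec_mulVec, dotProduct_mulVec, mulVec_transpose]

theorem dotProduct_diagonal_mulVec [DecidableEq ι] (d x : ι → ℝ) :
    x ⬝ᵥ diagonal d *ᵥ x = ∑ i, d i * x i ^ 2 := by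
  simp only [dotProduct, mulVec_diagonal]
  exact sum_congr rfl fun i _ => by ring

theorem dotProduct_mulVec_le_of_transpose_mulVec_eq_zero [DecidableEq ι] {A : Matrix ι κ ℝ}
    (G : Matrix κ κ ℝ) {d : ι → ℝ} {c : ℝ} (hd : ∀ i, d i ≤ c) {w : ι → ℝ}
    (hw : Aᵀ *ᵥ w = 0) : w ⬝ᵥ (A * G * Aᵀ + diagonal d) *ᵥ w ≤ c * (w ⬝ᵥ w) := by
  rw [add_mulVec, dotProduct_add, dotProduct_mul_mul_transpose_mulVec, hw, zero_dotProduct,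
    zero_add, dotProduct_diagonal_mulVec, dotProduct, mul_sum]
  exact sum_le_sum fun i _ => by
    rw [sq]; exact mul_le_mul_of_nonneg_right (hd i) (mul_self_nonneg _)

theorem mul_dotProduct_le_dotProduct_mulVec_of_transpose_mul_self [DecidableEq ι] [DecidableEq κ]
    {A : Matrix ι κ ℝ} {m : ℝ} (hA : Aᵀ * A = m • 1) {G : Matrix κ κ ℝ} {c : ℝ}
    (hG : ∀ y, c * (y ⬝ᵥ y) ≤ y ⬝ᵥ G *ᵥ y) {d : ι → ℝ} (hd : ∀ i, 0 ≤ d i) (y : κ → ℝ) :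
    m * c * ((A *ᵥ y) ⬝ᵥ (A *ᵥ y)) ≤ (A *ᵥ y) ⬝ᵥ (A * G * Aᵀ + diagonal d) *ᵥ (A *ᵥ y) := by
  have hAAy : Aᵀ *ᵥ (A *ᵥ y) = m • y := by rw [mulVec_mulVec, hA, smul_mulVec, one_mulVec]
  have hnorm : (A *ᵥ y) ⬝ᵥ (A *ᵥ y) = m * (y ⬝ᵥ y) := by
    rw [dotProduct_mulVec, ← mulVec_transpose, hAAy, smul_dotProduct, smul_eq_mul]
  have hdiag : 0 ≤ (A *ᵥ y) ⬝ᵥ diagonal d *ᵥ (A *ᵥ y) := by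
    rw [dotProduct_diagonal_mulVec]
    exact sum_nonneg fun i _ => mul_nonneg (hd i) (sq_nonneg _)
  rw [add_mulVec, dotProduct_add, dotProduct_mul_mul_transpose_mulVec, hAAy, hnorm]
  simp only [mulVec_smul, dotProduct_smul, smul_dotProduct, smul_eq_mul]
  nlinarith [hG y, mul_self_nonneg m]

end Matrix

section Eigenvalues

variable {n : ℕ} {M : Matrix (Fin n) (Fin n) ℝ}

theorem eigDesc_antitone (hM : M.IsHermitian) : Antitone (eigDesc hM) :=
  fun _ _ hij => Tuple.monotone_sort hM.eigenvalues (Fin.rev_le_rev.mpr hij)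

theorem card_filter_eigDesc (hM : M.IsHermitian) (P : ℝ → Prop) [DecidablePred P] :
    #{i | P (eigDesc hM i)} = #{j | P (hM.eigenvalues j)} :=
  card_equiv (Fin.revPerm.trans (Tuple.sort hM.eigenvalues)) fun _ => by
    simp only [mem_filter, mem_univ, true_and]; rfl

theorem le_eigDesc_of_lt_card (hM : M.IsHermitian) {a : ℝ} {i : Fin n}
    (hi : i.1 < #{j | a ≤ hM.eigenvalues j}) : a ≤ eigDesc hM i := by
  by_contra! h
  have hsub : ({j | a ≤ eigDesc hM j} : Finset (Fin n)) ⊆ Iio i := by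
    intro j hj
    simp only [mem_filter, mem_univ, true_and] at hj
    by_contra! hij
    exact (hj.trans (eigDesc_antitone hM (by simpa using hij))).not_gt h
  have := card_le_card hsub
  rw [card_filter_eigDesc hM (a ≤ ·), Fin.card_Iio] at this
  omega

theorem eigDesc_le_of_le_add_card (hM : M.IsHermitian) {c : ℝ} {i : Fin n}
    (hi : n ≤ i.1 + #{j | hM.eigenvalues j ≤ c}) : eigDesc hM i ≤ c := by
  by_contra! h
  have hsub : ({j | eigDesc hM j ≤ c} : Finset (Fin n)) ⊆ Ioi i := by
    intro j hj
    simp only [mem_filter, mem_univ, true_and] at hj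
    by_contra! hij
    exact (hj.trans_lt' (h.trans_le (eigDesc_antitone hM (by simpa using hij)))).false
  have := card_le_card hsub
  rw [card_filter_eigDesc hM (· ≤ c), Fin.card_Ioi] at this
  omega

theorem le_eigDesc_of_lt_finrank (hM : M.IsHermitian) {U : Submodule ℝ (Fin n → ℝ)} {a : ℝ}
    (hU : ∀ u ∈ U, a * (u ⬝ᵥ u) ≤ u ⬝ᵥ M *ᵥ u) {i : Fin n} (hi : i.1 < Module.finrank ℝ U) :
    a ≤ eigDesc hM i := by
  refine le_eigDesc_of_lt_card hM (hi.trans_le ?_)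
  rw [← (WithLp.linearEquiv 2 ℝ (Fin n → ℝ)).symm.finrank_map_eq U]
  refine hM.eigenvectorBasis.finrank_le_card_of_le_inner hM.toEuclideanLin_eigenvectorBasis ?_
  rintro _ ⟨u, hu, rfl⟩
  simpa [EuclideanSpace.norm_toLp_sq, EuclideanSpace.inner_toLp_toLp, dotProduct_comm]
    using hU u hu

theorem eigDesc_le_of_le_add_finrank (hM : M.IsHermitian) {W : Submodule ℝ (Fin n → ℝ)}
    {c : ℝ} (hW : ∀ w ∈ W, w ⬝ᵥ M *ᵥ w ≤ c * (w ⬝ᵥ w)) {i : Fin n}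
    (hi : n ≤ i.1 + Module.finrank ℝ W) : eigDesc hM i ≤ c := by
  refine eigDesc_le_of_le_add_card hM (hi.trans (Nat.add_le_add_left ?_ _))
  rw [← (WithLp.linearEquiv 2 ℝ (Fin n → ℝ)).symm.finrank_map_eq W]
  refine hM.eigenvectorBasis.finrank_le_card_of_inner_le hM.toEuclideanLin_eigenvectorBasis ?_
  rintro _ ⟨w, hw, rfl⟩
  simpa [EuclideanSpace.norm_toLp_sq, EuclideanSpace.inner_toLp_toLp, dotProduct_comm]
    using hW w hw

theorem le_eigDesc_of_eq_mul_mul_transpose_add_diagonal {r : ℕ} {A : Matrix (Fin n) (Fin r) ℝ}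
    {m : ℝ} (hA : Aᵀ * A = m • 1) (hm : m ≠ 0) {G : Matrix (Fin r) (Fin r) ℝ} {c : ℝ}
    (hG : ∀ y, c * (y ⬝ᵥ y) ≤ y ⬝ᵥ G *ᵥ y) {d : Fin n → ℝ} (hd : ∀ i, 0 ≤ d i)
    (hM : M.IsHermitian) (hMeq : M = A * G * Aᵀ + diagonal d) {i : Fin n} (hi : i.1 < r) :
    m * c ≤ eigDesc hM i := by
  refine le_eigDesc_of_lt_finrank hM (U := LinearMap.range A.mulVecLin) ?_ ?_
  · rintro _ ⟨y, rfl⟩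
    rw [hMeq]
    exact mul_dotProduct_le_dotProduct_mulVec_of_transpose_mul_self hA hG hd y
  · rwa [← rank, rank_eq_card_of_transpose_mul_self_eq_smul hm hA, Fintype.card_fin]

theorem eigDesc_le_of_eq_mul_mul_transpose_add_diagonal {r : ℕ} {A : Matrix (Fin n) (Fin r) ℝ}
    {G : Matrix (Fin r) (Fin r) ℝ} {d : Fin n → ℝ} {c : ℝ} (hd : ∀ i, d i ≤ c)
    (hM : M.IsHermitian) (hMeq : M = A * G * Aᵀ + diagonal d) {i : Fin n} (hi : r ≤ i.1) :
    eigDesc hM i ≤ c := by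
  refine eigDesc_le_of_le_add_finrank hM (W := LinearMap.ker Aᵀ.mulVecLin)
    (fun w hw => hMeq ▸ dotProduct_mulVec_le_of_transpose_mulVec_eq_zero G hd hw) ?_
  have := card_le_card_add_finrank_ker_mulVecLin Aᵀ
  simp only [Fintype.card_fin] at this
  omega

end Eigenvalues

section Membership

variable {ι κ : Type*} [DecidableEq κ]

def membershipMatrix (z : ι → κ) : Matrix ι κ ℝ :=
  Matrix.of fun i k => if z i = k then 1 else 0

theorem membershipMatrix_mul_mul_transpose_apply [Fintype κ] (z : ι → κ) (G : Matrix κ κ ℝ)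
    (i j : ι) : (membershipMatrix z * G * (membershipMatrix z)ᵀ) i j = G (z i) (z j) := by
  simp [membershipMatrix, mul_apply]

theorem transpose_membershipMatrix_mul_self [Fintype ι] {z : ι → κ} {m : ℕ}
    (hsize : ∀ k, #{i | z i = k} = m) :
    (membershipMatrix z)ᵀ * membershipMatrix z = (m : ℝ) • 1 := by
  ext k l
  simp only [membershipMatrix, mul_apply, transpose_apply, of_apply, mul_ite, mul_one, mul_zero,
    Matrix.smul_apply, one_apply, smul_eq_mul]
  by_cases hkl : k = l
  · subst hkl
    rw [if_pos rfl, ← hsize k, natCast_card_filter]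
    exact sum_congr rfl fun j _ => by split_ifs <;> rfl
  · rw [if_neg hkl]
    exact sum_eq_zero fun j _ => by grind

theorem gaussianKernel_eq [DecidableEq ι] [Fintype κ] {p : ℕ} {z : ι → κ} {η : ℝ} {f : ℝ → ℝ}
    (hf : ∀ x, f x = Real.exp (-(η * x))) {μ : κ → Fin p → ℝ} {σ : κ → ℝ} {B : Matrix κ κ ℝ}
    (hB : B = Matrix.of (fun k ℓ => f (∑ t, (μ k t - μ ℓ t) ^ 2))) {K : Matrix ι ι ℝ}
    (hK : K = Matrix.of (fun i j => if i = j then f 0 else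
      f ((∑ t, (μ (z i) t - μ (z j) t) ^ 2) + (σ (z i)) ^ 2 + (σ (z j)) ^ 2))) :
    K = membershipMatrix z * (diagonal (fun k => Real.exp (-(η * σ k ^ 2))) * B *
        diagonal (fun k => Real.exp (-(η * σ k ^ 2)))) * (membershipMatrix z)ᵀ +
      diagonal (fun i => 1 - Real.exp (-(2 * η * σ (z i) ^ 2))) := by
  subst hB hK
  ext i j
  rw [Matrix.add_apply, membershipMatrix_mul_mul_transpose_apply, mul_diagonal, diagonal_mul]
  by_cases hij : i = j
  · subst hij
    have hdist : ∑ t, (μ (z i) t - μ (z i) t) ^ 2 = 0 := by simp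
    simp only [of_apply, ↓reduceIte, diagonal_apply_eq, hdist, hf, mul_zero, neg_zero,
      Real.exp_zero, mul_one, ← Real.exp_add]
    rw [show -(η * σ (z i) ^ 2) + -(η * σ (z i) ^ 2) = -(2 * η * σ (z i) ^ 2) by ring]
    ring
  · simp only [of_apply, if_neg hij, hf, diagonal_apply_ne _ hij, add_zero, ← Real.exp_add]
    congr 1
    ring

end Membership

/-- eigengap of the population kernel matrix: with the Gaussian kernel
`f(x) = exp(−ηx)`, `η > 0`, pairwise distinct means `μ_1,…,μ_r ∈ ℝ^p`, and
`B ∈ ℝ^{r×r}` given by `B_{kℓ} = exp(−η d_{kℓ}²)` where `d_{kℓ} = ‖μ_k − μ_ℓ‖`, the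
population kernel matrix `K̃` (on a partition of `{1,…,n}` into `r` clusters of size `n/r`)
satisfies `λ_r(K̃) − λ_{r+1}(K̃) ≥ (n/r)·λ_min(B)·min_k exp(−2ησ_k²) − 2·max_k (1 − exp(−2ησ_k²))`. -/
theorem stmt_2 (n r p : ℕ) (hr : 1 ≤ r) (hn : r + 1 ≤ n) (hdvd : r ∣ n)
    (z : Fin n → Fin r)
    (hsize : ∀ k : Fin r, (Finset.univ.filter fun i => z i = k).card = n / r)
    (η : ℝ) (hη : 0 < η)
    (f : ℝ → ℝ) (hf : ∀ x, f x = Real.exp (-(η * x)))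
    (μ : Fin r → Fin p → ℝ)
    (σ : Fin r → ℝ)
    (B : Matrix (Fin r) (Fin r) ℝ)
    (hB : B = Matrix.of (fun k ℓ => f (∑ t, (μ k t - μ ℓ t) ^ 2)))
    (hBHerm : B.IsHermitian)
    (Kt : Matrix (Fin n) (Fin n) ℝ)
    (hKt : Kt = Matrix.of (fun i j => if i = j then f 0 else
      f ((∑ t, (μ (z i) t - μ (z j) t) ^ 2) + (σ (z i)) ^ 2 + (σ (z j)) ^ 2)))
    (hHerm : Kt.IsHermitian) :
    (n : ℝ) / r * (⨅ k, hBHerm.eigenvalues k) * (⨅ k, Real.exp (-(2 * η * (σ k) ^ 2))) -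
      2 * (⨆ k, (1 - Real.exp (-(2 * η * (σ k) ^ 2)))) ≤
      eigDesc hHerm ⟨r - 1, by omega⟩ - eigDesc hHerm ⟨r, by omega⟩ := by
  have : Nonempty (Fin r) := ⟨⟨0, hr⟩⟩
  set lamMin := ⨅ k, hBHerm.eigenvalues k
  set expMin := ⨅ k, Real.exp (-(2 * η * σ k ^ 2))
  set δ := ⨆ k, (1 - Real.exp (-(2 * η * σ k ^ 2)))
  have hK := gaussianKernel_eq hf hB hKt
  have hexp_le_one (k : Fin r) : Real.exp (-(2 * η * σ k ^ 2)) ≤ 1 :=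
    Real.exp_le_one_iff.mpr (neg_nonpos.mpr (by positivity))
  have hδ (k : Fin r) : 1 - Real.exp (-(2 * η * σ k ^ 2)) ≤ δ :=
    le_ciSup (f := fun k => 1 - Real.exp (-(2 * η * σ k ^ 2))) (Set.finite_range _).bddAbove k
  have hδ0 : 0 ≤ δ := (sub_nonneg.mpr (hexp_le_one ⟨0, hr⟩)).trans (hδ ⟨0, hr⟩)
  have hupper : eigDesc hHerm ⟨r, by omega⟩ ≤ δ :=
    eigDesc_le_of_eq_mul_mul_transpose_add_diagonal (fun i => hδ (z i)) hHerm hK le_rfl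
  have hsorted : eigDesc hHerm ⟨r, by omega⟩ ≤ eigDesc hHerm ⟨r - 1, by omega⟩ :=
    eigDesc_antitone hHerm (Fin.mk_le_mk.mpr (Nat.sub_le r 1))
  rcases lt_or_ge lamMin 0 with hneg | hpos
  · have : (n : ℝ) / r * lamMin * expMin ≤ 0 :=
      mul_nonpos_of_nonpos_of_nonneg (mul_nonpos_of_nonneg_of_nonpos (by positivity) hneg.le)
        (le_ciInf fun k => (Real.exp_pos _).le)
    linarith
  have hs (k : Fin r) : expMin ≤ Real.exp (-(η * σ k ^ 2)) ^ 2 := by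
    rw [sq, ← Real.exp_add, show -(η * σ k ^ 2) + -(η * σ k ^ 2) = -(2 * η * σ k ^ 2) by ring]
    exact ciInf_le (f := fun k => Real.exp (-(2 * η * σ k ^ 2))) (Set.finite_range _).bddBelow k
  have hm : ((n / r : ℕ) : ℝ) ≠ 0 := Nat.cast_ne_zero.mpr (Nat.div_pos (by omega) hr).ne'
  have hlower : (n : ℝ) / r * (lamMin * expMin) ≤ eigDesc hHerm ⟨r - 1, by omega⟩ := by
    rw [← Nat.cast_div hdvd (by positivity)]
    exact le_eigDesc_of_eq_mul_mul_transpose_add_diagonal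
      (transpose_membershipMatrix_mul_self hsize) hm
      (hBHerm.mul_mul_dotProduct_le_diagonal_mul_mul_diagonal
        (fun k => ciInf_le (Set.finite_range _).bddBelow k) hpos hs)
      (fun i => sub_nonneg.mpr (hexp_le_one (z i))) hHerm hK (Nat.sub_lt hr Nat.one_pos)
  linarith [mul_assoc ((n : ℝ) / r) lamMin expMin]
end

section
/- Lemma: let K ∈ ℝ^{n×n} be any symmetric matrix, suppose γ_min > 0, and let X̂ be SDP-1-feasible with ⟨K, X̂⟩ ≥ ⟨K, X₀⟩ (in particular, X̂ may be any maximizer of ⟨K, X⟩ over SDP-1-feasible matrices X). Then ‖X₀ − X̂‖₁ ≤ 2·⟨K − K̃, X̂ − X₀⟩ / γ_min. -/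
open Matrix

/-- The entrywise ℓ¹ norm of a matrix: `‖M‖₁ = Σ_{i,j} |M_{ij}|`. -/
def l1Norm {n : ℕ} (M : Matrix (Fin n) (Fin n) ℝ) : ℝ := ∑ i, ∑ j, |M i j|

/-- The trace inner product of two matrices: `⟨A, B⟩ = trace(Aᵀ B)`. -/
def mInner {n : ℕ} (A B : Matrix (Fin n) (Fin n) ℝ) : ℝ := Matrix.trace (Aᵀ * B)

/-- A matrix `X ∈ ℝ^{n×n}` is SDP-1-feasible if it is symmetric positive semidefinite,
entrywise nonnegative, has all row sums equal to `n/r`, and has unit diagonal. -/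
def SDPFeasible (n r : ℕ) (X : Matrix (Fin n) (Fin n) ℝ) : Prop :=
  X.PosSemidef ∧ (∀ i j, 0 ≤ X i j) ∧ (∀ i, ∑ j, X i j = (n : ℝ) / r) ∧ (∀ i, X i i = 1)

/-- The population kernel matrix: `K̃_{ij} = f(d_{kℓ}² + σ_k² + σ_ℓ²)` for `i ∈ C̃_k`,
`j ∈ C̃_ℓ`, `i ≠ j`, and `K̃_{ii} = f(0)`, where `d_{kℓ}² = ‖μ_k − μ_ℓ‖²`. -/
noncomputable def popKernel (n r p : ℕ) (z : Fin n → Fin r) (f : ℝ → ℝ)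
    (μ : Fin r → Fin p → ℝ) (σ : Fin r → ℝ) : Matrix (Fin n) (Fin n) ℝ :=
  Matrix.of fun i j => if i = j then f 0 else
    f ((∑ t, (μ (z i) t - μ (z j) t) ^ 2) + (σ (z i)) ^ 2 + (σ (z j)) ^ 2)

/-- `γ_min = min_{k ≠ ℓ} [f(2σ_k²) − f(d_{kℓ}² + σ_k² + σ_ℓ²)]`. -/
noncomputable def gammaMin (r p : ℕ) (f : ℝ → ℝ) (μ : Fin r → Fin p → ℝ)
    (σ : Fin r → ℝ) : ℝ :=
  ⨅ q : {q : Fin r × Fin r // q.1 ≠ q.2},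
    (f (2 * (σ q.1.1) ^ 2) -
      f ((∑ t, (μ q.1.1 t - μ q.1.2 t) ^ 2) + (σ q.1.1) ^ 2 + (σ q.1.2) ^ 2))

/-!
Let `D = X₀ - X̂`. In each row `i`, `D` is nonnegative on the cluster of `i` (positive
semidefiniteness and the unit diagonal force `X̂ ≤ 1`), nonpositive off it, and sums to zero,
so `‖D_i‖₁` is twice the off-cluster mass of `X̂_i`. Since `K̃_{ij} = f(2σ_k²)` off the diagonal
of the cluster and `D_ii = 0`, the row sum of `K̃ ∘ D` equals
`Σ_{j off cluster} (f(2σ_k²) - K̃_ij) X̂_ij ≥ γ_min · (off-cluster mass)`. Summing over rows gives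
`γ_min ‖D‖₁ ≤ 2⟨K̃, D⟩`, and `⟨K, D⟩ ≤ 0` turns `⟨K̃, D⟩` into `⟨K - K̃, -D⟩`.
-/

lemma mInner_sub_left {n : ℕ} (A B C : Matrix (Fin n) (Fin n) ℝ) :
    mInner (A - B) C = mInner A C - mInner B C := by
  simp only [mInner, transpose_sub, Matrix.sub_mul, trace_sub]

lemma mInner_sub_right {n : ℕ} (A B C : Matrix (Fin n) (Fin n) ℝ) :
    mInner A (B - C) = mInner A B - mInner A C := by
  simp only [mInner, Matrix.mul_sub, trace_sub]

lemma mInner_eq_sum {n : ℕ} (A B : Matrix (Fin n) (Fin n) ℝ) :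
    mInner A B = ∑ i, ∑ j, A i j * B i j := by
  simp only [mInner, trace, diag, mul_apply, transpose_apply]
  exact Finset.sum_comm

lemma Matrix.PosSemidef.apply_add_apply_le {ι : Type*} [Fintype ι] [DecidableEq ι]
    {M : Matrix ι ι ℝ} (hM : M.PosSemidef) (i j : ι) :
    M i j + M j i ≤ M i i + M j j := by
  have h := hM.dotProduct_mulVec_nonneg (Pi.single i 1 - Pi.single j 1)
  simp only [star_trivial, dotProduct, mulVec, Pi.sub_apply, Pi.single_apply,
    sub_mul, mul_sub, mul_ite, mul_one, mul_zero, ite_mul, one_mul, zero_mul,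
    Finset.sum_sub_distrib, Finset.sum_ite_eq', Finset.mem_univ, if_true] at h
  linarith

lemma Matrix.PosSemidef.apply_le_one {ι : Type*} [Fintype ι] [DecidableEq ι]
    {M : Matrix ι ι ℝ} (hM : M.PosSemidef) (hdiag : ∀ i, M i i = 1) (i j : ι) :
    M i j ≤ 1 := by
  have hsymm : M j i = M i j := by simpa using congrFun (congrFun hM.1 i) j
  linarith [hM.apply_add_apply_le i j, hdiag i, hdiag j]

open Finset in
lemma mul_sum_abs_le_two_mul_sum_mul {ι : Type*} [Fintype ι] (s : Finset ι) {d k : ι → ℝ}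
    {a γ : ℝ} (hsum : ∑ j, d j = 0) (hd_in : ∀ j ∈ s, 0 ≤ d j) (hd_out : ∀ j ∉ s, d j ≤ 0)
    (hk_in : ∀ j ∈ s, d j = 0 ∨ k j = a) (hk_out : ∀ j ∉ s, γ ≤ a - k j) :
    γ * ∑ j, |d j| ≤ 2 * ∑ j, k j * d j := by
  classical
  have hsplit : ∑ j ∈ s, d j = -∑ j ∈ sᶜ, d j := by
    linarith [sum_add_sum_compl s d]
  have habs : ∑ j, |d j| = -2 * ∑ j ∈ sᶜ, d j := by
    rw [← sum_add_sum_compl s, sum_congr rfl fun j hj => abs_of_nonneg (hd_in j hj),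
      sum_congr rfl fun j hj => abs_of_nonpos (hd_out j (mem_compl.mp hj)), hsplit,
      sum_neg_distrib]
    ring
  have hcenter : ∑ j, k j * d j = ∑ j ∈ sᶜ, (k j - a) * d j := by
    have hzero : ∑ j ∈ s, (k j - a) * d j = 0 :=
      sum_eq_zero fun j hj => by rcases hk_in j hj with h | h <;> simp [h]
    rw [← zero_add (∑ j ∈ sᶜ, _), ← hzero, sum_add_sum_compl]
    simp only [sub_mul, sum_sub_distrib, ← mul_sum, hsum, mul_zero, sub_zero]
  have hbound : ∑ j ∈ sᶜ, γ * -d j ≤ ∑ j ∈ sᶜ, (k j - a) * d j :=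
    sum_le_sum fun j hj => by
      have := mul_le_mul_of_nonneg_right (hk_out j (mem_compl.mp hj))
        (neg_nonneg.mpr (hd_out j (mem_compl.mp hj)))
      linarith
  rw [← mul_sum, sum_neg_distrib] at hbound
  rw [habs, hcenter]
  linarith

def clusterMatrix {ι κ : Type*} [DecidableEq κ] (z : ι → κ) : Matrix ι ι ℝ :=
  of fun i j => if z i = z j then 1 else 0

lemma membershipMatrix_mul_transpose {ι κ : Type*} [Fintype κ] [DecidableEq κ] (z : ι → κ) :
    (of fun i k => if z i = k then (1 : ℝ) else 0) *
      (of fun i k => if z i = k then (1 : ℝ) else 0)ᵀ =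
      clusterMatrix z := by
  ext i j
  simp [clusterMatrix, mul_apply, eq_comm]

lemma sum_clusterMatrix_apply {ι κ : Type*} [Fintype ι] [DecidableEq κ] (z : ι → κ) (i : ι) :
    ∑ j, clusterMatrix z i j = (Finset.univ.filter fun j => z j = z i).card := by
  simp [clusterMatrix, Finset.sum_boole, eq_comm]

lemma mul_l1Norm_le_two_mul_mInner {n : ℕ} {κ : Type*} [DecidableEq κ] (z : Fin n → κ)
    (a : κ → ℝ) {γ : ℝ} {X K : Matrix (Fin n) (Fin n) ℝ}
    (hX_nonneg : ∀ i j, 0 ≤ X i j) (hX_le : ∀ i j, X i j ≤ 1) (hX_diag : ∀ i, X i i = 1)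
    (hX_row : ∀ i, ∑ j, X i j = ∑ j, clusterMatrix z i j)
    (hK_in : ∀ i j, i ≠ j → z i = z j → K i j = a (z i))
    (hK_out : ∀ i j, z i ≠ z j → γ ≤ a (z i) - K i j) :
    γ * l1Norm (clusterMatrix z - X) ≤ 2 * mInner K (clusterMatrix z - X) := by
  rw [l1Norm, mInner_eq_sum, Finset.mul_sum, Finset.mul_sum]
  refine Finset.sum_le_sum fun i _ => ?_
  refine mul_sum_abs_le_two_mul_sum_mul (Finset.univ.filter fun j => z i = z j) (a := a (z i))
    ?_ ?_ ?_ ?_ ?_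
  · simp [Finset.sum_sub_distrib, hX_row]
  · intro j hj
    simp_all [clusterMatrix]
  · intro j hj
    simp_all [clusterMatrix]
  · intro j hj
    rw [Finset.mem_filter] at hj
    by_cases hij : i = j
    · subst hij
      simp [clusterMatrix, hX_diag]
    · exact Or.inr (hK_in i j hij hj.2)
  · intro j hj
    exact hK_out i j (by simpa using hj)

lemma popKernel_apply_of_ne {n r p : ℕ} (z : Fin n → Fin r) (f : ℝ → ℝ) (μ : Fin r → Fin p → ℝ)
    (σ : Fin r → ℝ) {i j : Fin n} (hij : i ≠ j) :
    popKernel n r p z f μ σ i j =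
      f ((∑ t, (μ (z i) t - μ (z j) t) ^ 2) + (σ (z i)) ^ 2 + (σ (z j)) ^ 2) := by
  simp only [popKernel, of_apply, if_neg hij]

lemma popKernel_apply_of_ne_of_eq {n r p : ℕ} (z : Fin n → Fin r) (f : ℝ → ℝ)
    (μ : Fin r → Fin p → ℝ) (σ : Fin r → ℝ) {i j : Fin n} (hij : i ≠ j) (hz : z i = z j) :
    popKernel n r p z f μ σ i j = f (2 * (σ (z i)) ^ 2) := by
  rw [popKernel_apply_of_ne z f μ σ hij, ← hz]
  simp only [sub_self, ne_eq, OfNat.ofNat_ne_zero, not_false_eq_true, zero_pow,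
    Finset.sum_const_zero, zero_add, two_mul]

lemma gammaMin_le {r p : ℕ} (f : ℝ → ℝ) (μ : Fin r → Fin p → ℝ) (σ : Fin r → ℝ) {k l : Fin r}
    (hkl : k ≠ l) :
    gammaMin r p f μ σ ≤
      f (2 * (σ k) ^ 2) - f ((∑ t, (μ k t - μ l t) ^ 2) + (σ k) ^ 2 + (σ l) ^ 2) :=
  ciInf_le (Set.finite_range _).bddBelow (⟨(k, l), hkl⟩ : {q : Fin r × Fin r // q.1 ≠ q.2})

theorem stmt_4_general (n r p : ℕ) (hdvd : r ∣ n)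
    (z : Fin n → Fin r)
    (hsize : ∀ k : Fin r, (Finset.univ.filter fun i => z i = k).card = n / r)
    (Z : Matrix (Fin n) (Fin r) ℝ)
    (hZ : Z = Matrix.of (fun i k => if z i = k then (1 : ℝ) else 0))
    (X₀ : Matrix (Fin n) (Fin n) ℝ) (hX₀ : X₀ = Z * Zᵀ)
    (f : ℝ → ℝ) (μ : Fin r → Fin p → ℝ) (σ : Fin r → ℝ)
    (K : Matrix (Fin n) (Fin n) ℝ)
    (hγ : 0 < gammaMin r p f μ σ)
    (Xh : Matrix (Fin n) (Fin n) ℝ) (hfeas : SDPFeasible n r Xh)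
    (hopt : mInner K X₀ ≤ mInner K Xh) :
    l1Norm (X₀ - Xh) ≤
      2 * mInner (K - popKernel n r p z f μ σ) (Xh - X₀) / gammaMin r p f μ σ := by
  obtain ⟨hpsd, hnonneg, hrow, hdiag⟩ := hfeas
  rw [hX₀, hZ, membershipMatrix_mul_transpose] at hopt ⊢
  have hrow_cluster : ∀ i, ∑ j, Xh i j = ∑ j, clusterMatrix z i j := fun i => by
    rw [hrow, sum_clusterMatrix_apply, hsize, Nat.cast_div_charZero hdvd]
  have hpop := mul_l1Norm_le_two_mul_mInner z (fun k => f (2 * σ k ^ 2))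
    (K := popKernel n r p z f μ σ) hnonneg (hpsd.apply_le_one hdiag) hdiag hrow_cluster
    (fun _ _ => popKernel_apply_of_ne_of_eq z f μ σ) fun i j hz => by
      rw [popKernel_apply_of_ne z f μ σ (ne_of_apply_ne z hz)]
      exact gammaMin_le f μ σ hz
  rw [le_div_iff₀ hγ, mInner_sub_left, mInner_sub_right, mInner_sub_right]
  rw [mInner_sub_right] at hpop
  linarith

/-- for any symmetric `K`, if `γ_min > 0` and `X̂` is SDP-1-feasible with
`⟨K, X̂⟩ ≥ ⟨K, X₀⟩`, then `‖X₀ − X̂‖₁ ≤ 2·⟨K − K̃, X̂ − X₀⟩ / γ_min`. -/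
theorem stmt_4 (n r p : ℕ) (hr : 2 ≤ r) (hdvd : r ∣ n)
    (z : Fin n → Fin r)
    (hsize : ∀ k : Fin r, (Finset.univ.filter fun i => z i = k).card = n / r)
    (Z : Matrix (Fin n) (Fin r) ℝ)
    (hZ : Z = Matrix.of (fun i k => if z i = k then (1 : ℝ) else 0))
    (X₀ : Matrix (Fin n) (Fin n) ℝ) (hX₀ : X₀ = Z * Zᵀ)
    (f : ℝ → ℝ) (μ : Fin r → Fin p → ℝ) (σ : Fin r → ℝ)
    (K : Matrix (Fin n) (Fin n) ℝ) (hK : K.IsSymm)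
    (hγ : 0 < gammaMin r p f μ σ)
    (Xh : Matrix (Fin n) (Fin n) ℝ) (hfeas : SDPFeasible n r Xh)
    (hopt : mInner K X₀ ≤ mInner K Xh) :
    l1Norm (X₀ - Xh) ≤
      2 * mInner (K - popKernel n r p z f μ σ) (Xh - X₀) / gammaMin r p f μ σ :=
  stmt_4_general n r p hdvd z hsize Z hZ X₀ hX₀ f μ σ K hγ Xh hfeas hopt
end

section
/- If X̂ is SDP-1-feasible, then ‖X₀ − X̂‖₁ ≤ 2 · Σ_{k=1}^{r} Σ_{i ∈ C̃_k} Σ_{j ∈ C̃_k} (1 − X̂_{ij}). -/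
open Matrix

/-!
The bound holds with equality, row by row. Entries of a positive semidefinite matrix with unit
diagonal are at most `1`, so on the cluster `C` of `i` we have `|X₀ - X̂|ᵢⱼ = 1 - X̂ᵢⱼ`, while off
it `|X₀ - X̂|ᵢⱼ = X̂ᵢⱼ`. Since row `i` of `X̂` sums to `n / r = |C|`, its mass outside `C` equals
the deficit `Σ_{j ∈ C} (1 - X̂ᵢⱼ)` inside `C`.
-/

open Finset

theorem Matrix.PosSemidef.two_mul_apply_le {ι R : Type*} [Fintype ι] [DecidableEq ι]
    [CommRing R] [PartialOrder R] [StarRing R] [TrivialStar R] [StarOrderedRing R]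
    {A : Matrix ι ι R} (hA : A.PosSemidef) (i j : ι) : 2 * A i j ≤ A i i + A j j := by
  have hsymm : A j i = A i j := by simpa using congrFun (congrFun hA.1 i) j
  have hform := hA.dotProduct_mulVec_nonneg (Pi.single i 1 - Pi.single j 1)
  simp only [star_trivial, mulVec_sub, mulVec_single, MulOpposite.op_one, one_smul,
    dotProduct_sub, sub_dotProduct, single_dotProduct, col_apply, one_mul, hsymm] at hform
  linear_combination hform

theorem Matrix.mul_transpose_of_ite_eq {ι κ R : Type*} [Fintype κ] [DecidableEq κ]
    [NonAssocSemiring R] (z : ι → κ) :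
    (of fun i k => if z i = k then (1 : R) else 0) * (of fun i k => if z i = k then (1 : R) else 0)ᵀ
      = of fun i j => if z i = z j then 1 else 0 := by
  ext i j
  simp [mul_apply]

theorem sum_fiberwise_dep {ι κ M : Type*} [Fintype κ] [DecidableEq κ] [AddCommMonoid M]
    (s : Finset ι) (g : ι → κ) (f : κ → ι → M) :
    ∑ j, ∑ i ∈ s with g i = j, f j i = ∑ i ∈ s, f (g i) i := by
  rw [← sum_fiberwise s g fun i => f (g i) i]
  exact sum_congr rfl fun j _ => sum_congr rfl fun i hi => by rw [(mem_filter.1 hi).2]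

theorem sum_abs_ite_sub_eq_two_mul_sum {ι : Type*} [Fintype ι] (p : ι → Prop) [DecidablePred p]
    (x : ι → ℝ) (hnn : ∀ j, 0 ≤ x j) (hle : ∀ j, p j → x j ≤ 1)
    (hsum : ∑ j, x j = #{j | p j}) :
    ∑ j, |(if p j then 1 else 0) - x j| = 2 * ∑ j with p j, (1 - x j) := by
  have hin : ∑ j with p j, |(if p j then 1 else 0) - x j| = ∑ j with p j, (1 - x j) :=
    sum_congr rfl fun j hj => by
      rw [if_pos (mem_filter.1 hj).2, abs_of_nonneg (sub_nonneg.2 (hle j (mem_filter.1 hj).2))]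
  have hout : ∑ j with ¬p j, |(if p j then 1 else 0) - x j| = ∑ j with ¬p j, x j :=
    sum_congr rfl fun j hj => by
      rw [if_neg (mem_filter.1 hj).2, zero_sub, abs_neg, abs_of_nonneg (hnn j)]
  have hx := sum_filter_add_sum_filter_not univ p x
  rw [← sum_filter_add_sum_filter_not univ p, hin, hout, sum_sub_distrib, sum_const, nsmul_one]
  linarith

/-- if `X̂` is SDP-1-feasible, then
`‖X₀ − X̂‖₁ ≤ 2 · Σ_{k=1}^{r} Σ_{i ∈ C̃_k} Σ_{j ∈ C̃_k} (1 − X̂_{ij})`. -/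
theorem stmt_6 (n r : ℕ) (hdvd : r ∣ n)
    (z : Fin n → Fin r)
    (hsize : ∀ k : Fin r, (Finset.univ.filter fun i => z i = k).card = n / r)
    (Z : Matrix (Fin n) (Fin r) ℝ)
    (hZ : Z = Matrix.of (fun i k => if z i = k then (1 : ℝ) else 0))
    (X₀ : Matrix (Fin n) (Fin n) ℝ) (hX₀ : X₀ = Z * Zᵀ)
    (Xh : Matrix (Fin n) (Fin n) ℝ) (hfeas : SDPFeasible n r Xh) :
    l1Norm (X₀ - Xh) ≤
      2 * ∑ k : Fin r, ∑ i ∈ Finset.univ.filter (fun i => z i = k),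
        ∑ j ∈ Finset.univ.filter (fun j => z j = k), (1 - Xh i j) := by
  obtain ⟨hpsd, hnn, hrow, hdiag⟩ := hfeas
  subst hX₀ hZ
  rw [l1Norm, sum_fiberwise_dep, mul_sum]
  refine le_of_eq (sum_congr rfl fun i _ => ?_)
  simp only [Matrix.sub_apply, mul_transpose_of_ite_eq, of_apply, eq_comm (a := z i)]
  refine sum_abs_ite_sub_eq_two_mul_sum _ _ (hnn i) (fun j _ => ?_) ?_
  · linarith [hpsd.two_mul_apply_le i j, hdiag i, hdiag j]
  · rw [hrow, hsize, Nat.cast_div_charZero hdvd]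
end

section
/- Theorem (the k-means step produces exactly r inlier clusters): let {1,…,n} = I ∪ O with |O| = m, let Z be the membership matrix of a partition of {1,…,n} into r clusters each of size n/r such that every cluster contains at least one index from I, let ν ∈ ℝ^{r×r} satisfy νᵀν = (r/n)·I_r, and set V = Zν. Let V̂ ∈ ℝ^{n×r} satisfy V̂ᵀV̂ = I_r, and suppose there exists an orthogonal matrix R ∈ ℝ^{r×r} with ‖VR − V̂‖_F ≤ u. If 3u² + 2mr/n < 1, then every minimizer M* of ‖V̂ − M‖_F² over matrices M ∈ ℝ^{n×r} with at most r distinct rows has the property that the submatrix M*_I of rows indexed by I has exactly r distinct rows. -/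
open Matrix

def frobSq {n d : ℕ} (M : Matrix (Fin n) (Fin d) ℝ) : ℝ := ∑ i, ∑ j, (M i j) ^ 2

noncomputable def frobNorm {n d : ℕ} (M : Matrix (Fin n) (Fin d) ℝ) : ℝ :=
  Real.sqrt (frobSq M)

noncomputable def nDistinctRows {n d : ℕ} (M : Matrix (Fin n) (Fin d) ℝ) : ℕ :=
  (Finset.univ.image fun i => M i).card

/-!
If the rows of `M*` indexed by `I` took fewer than `r` values, some nonzero `w ∈ ℝ^r` would be
orthogonal to all of them. As `V̂` has orthonormal columns, `‖V̂w‖² = ‖w‖²`. On `I` we have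
`(V̂w)_i = ((V̂ - M*)w)_i`, and `M*` fits `V̂` at least as well as `VR`, which has at most `r`
distinct rows; so the inliers carry at most `u²‖w‖²`. Every row of `VR` has squared norm `r/n`,
so a row of `V̂` has squared norm at most `2r/n + 2‖(V̂ - VR)_i‖²`, and the `m` outliers carry at
most `(2mr/n + 2u²)‖w‖²`. Altogether `‖w‖² ≤ (3u² + 2mr/n)‖w‖² < ‖w‖²`.
-/

open Finset

lemma frobSq_nonneg {n d : ℕ} (A : Matrix (Fin n) (Fin d) ℝ) : 0 ≤ frobSq A :=
  sum_nonneg fun _ _ => sum_nonneg fun _ _ => sq_nonneg _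

lemma frobSq_sub_comm {n d : ℕ} (A B : Matrix (Fin n) (Fin d) ℝ) :
    frobSq (A - B) = frobSq (B - A) := by
  rw [← neg_sub B A]
  simp only [frobSq, Matrix.neg_apply, neg_sq]

lemma frobSq_le_sq_of_frobNorm_le {n d : ℕ} {A : Matrix (Fin n) (Fin d) ℝ} {u : ℝ}
    (h : frobNorm A ≤ u) : frobSq A ≤ u ^ 2 := by
  rw [← Real.sq_sqrt (frobSq_nonneg A)]
  exact pow_le_pow_left₀ (Real.sqrt_nonneg _) h 2

lemma sum_sq_rows_le_frobSq {n d : ℕ} (A : Matrix (Fin n) (Fin d) ℝ) (S : Finset (Fin n)) :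
    ∑ i ∈ S, ∑ j, A i j ^ 2 ≤ frobSq A :=
  sum_le_sum_of_subset_of_nonneg (subset_univ S) fun _ _ _ => sum_nonneg fun _ _ => sq_nonneg _

lemma nDistinctRows_submatrix_le {n r d : ℕ} (A : Matrix (Fin r) (Fin d) ℝ) (z : Fin n → Fin r) :
    nDistinctRows (A.submatrix z id) ≤ r :=
  calc nDistinctRows (A.submatrix z id) ≤ (univ.image A).card :=
        card_le_card (image_subset_iff.mpr fun i _ => mem_image_of_mem A (mem_univ (z i)))
    _ ≤ r := card_image_le.trans (card_univ.trans (Fintype.card_fin r)).le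

lemma of_ite_mul_eq_submatrix {α m l d : Type*} [Semiring α] [Fintype m] [DecidableEq m]
    (z : l → m) (A : Matrix m d α) :
    of (fun i k => if z i = k then (1 : α) else 0) * A = A.submatrix z id := by
  ext i j
  simp [mul_apply]

lemma mul_transpose_eq_smul_one_of_transpose_mul {m : Type*} [Fintype m] [DecidableEq m]
    {A : Matrix m m ℝ} {c : ℝ} (h : Aᵀ * A = c • 1) : A * Aᵀ = c • 1 := by
  rcases eq_or_ne c 0 with rfl | hc
  · have hA : A = 0 := conjTranspose_mul_self_eq_zero.mp (by simpa using h)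
    simp [hA]
  · have hinv : A * (c⁻¹ • Aᵀ) = 1 :=
      mul_eq_one_comm.mp (by rw [smul_mul, h, smul_smul, inv_mul_cancel₀ hc, one_smul])
    rw [Matrix.mul_smul] at hinv
    calc A * Aᵀ = c • (c⁻¹ • (A * Aᵀ)) := by rw [smul_smul, mul_inv_cancel₀ hc, one_smul]
      _ = c • 1 := by rw [hinv]

lemma sum_sq_row_eq_of_mul_transpose_eq_smul_one {α m d : Type*} [CommRing α] [Fintype d]
    [DecidableEq m] {B : Matrix m d α} {c : α} (h : B * Bᵀ = c • 1) (k : m) :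
    ∑ j, B k j ^ 2 = c := by
  simpa [mul_apply, sq] using congr_fun₂ h k k

lemma exists_ne_zero_forall_dotProduct_eq_zero {K ι : Type*} [Field K] [Fintype ι]
    (S : Finset (ι → K)) (hS : S.card < Fintype.card ι) :
    ∃ w ≠ 0, ∀ x ∈ S, x ⬝ᵥ w = 0 := by
  let f := mulVecLin (of fun x : S => (x : ι → K))
  have hker : LinearMap.ker f ≠ ⊥ := LinearMap.ker_ne_bot_of_finrank_lt (by simpa using hS)
  obtain ⟨w, hw, hw0⟩ := Submodule.exists_mem_ne_zero_of_ne_bot hker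
  exact ⟨w, hw0, fun x hx => congr_fun (LinearMap.mem_ker.mp hw) ⟨x, hx⟩⟩

lemma sum_sq_mulVec_of_transpose_mul_self_eq_one {m n : Type*} [Fintype m] [Fintype n]
    [DecidableEq n] {A : Matrix m n ℝ} (h : Aᵀ * A = 1) (w : n → ℝ) :
    ∑ i, (A *ᵥ w) i ^ 2 = ∑ j, w j ^ 2 := by
  have : A *ᵥ w ⬝ᵥ A *ᵥ w = w ⬝ᵥ w := by
    rw [dotProduct_mulVec, ← vecMul_transpose, vecMul_vecMul, h, vecMul_one]
  simpa [dotProduct, sq] using this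

lemma sum_sq_mulVec_le {m n : Type*} [Fintype n] (A : Matrix m n ℝ) (w : n → ℝ) (S : Finset m) :
    ∑ i ∈ S, (A *ᵥ w) i ^ 2 ≤ (∑ i ∈ S, ∑ j, A i j ^ 2) * ∑ j, w j ^ 2 := by
  rw [sum_mul]
  exact sum_le_sum fun i _ => sum_mul_sq_le_sq_mul_sq _ _ _

lemma sum_sq_row_le {m n : Type*} [Fintype n] (A B : Matrix m n ℝ) (i : m) :
    ∑ j, A i j ^ 2 ≤ 2 * ∑ j, B i j ^ 2 + 2 * ∑ j, (A - B) i j ^ 2 := by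
  rw [mul_sum, mul_sum, ← sum_add_distrib]
  exact sum_le_sum fun j _ => by rw [Matrix.sub_apply]; nlinarith [sq_nonneg (A i j - 2 * B i j)]

theorem le_card_image_rows_of_frobSq_le {n r : ℕ} {I O : Finset (Fin n)}
    (hIO : I ∪ O = univ) (hdisj : Disjoint I O) {Vh W M : Matrix (Fin n) (Fin r) ℝ}
    (hVh : Vhᵀ * Vh = 1) {c u : ℝ} (hW : ∀ i ∈ O, ∑ j, W i j ^ 2 ≤ c)
    (hVW : frobSq (Vh - W) ≤ u ^ 2) (hVM : frobSq (Vh - M) ≤ u ^ 2)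
    (hcond : 3 * u ^ 2 + 2 * O.card * c < 1) :
    r ≤ (I.image fun i => M i).card := by
  by_contra! hlt
  obtain ⟨w, hw0, horth⟩ :=
    exists_ne_zero_forall_dotProduct_eq_zero (I.image fun i => M i) (by simpa using hlt)
  set s := ∑ j, w j ^ 2
  have hs : 0 < s := by
    refine (sum_nonneg fun j _ => sq_nonneg (w j)).lt_of_ne fun h => hw0 (funext fun j => ?_)
    have hsq := (Fintype.sum_eq_zero_iff_of_nonneg fun j => sq_nonneg (w j)).mp h.symm
    simpa using congr_fun hsq j
  have hinliers : ∑ i ∈ I, (Vh *ᵥ w) i ^ 2 ≤ u ^ 2 * s :=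
    calc ∑ i ∈ I, (Vh *ᵥ w) i ^ 2 = ∑ i ∈ I, ((Vh - M) *ᵥ w) i ^ 2 := by
          refine sum_congr rfl fun i hi => ?_
          have hMw : (M *ᵥ w) i = 0 := horth _ (mem_image_of_mem _ hi)
          rw [sub_mulVec, Pi.sub_apply, hMw, sub_zero]
      _ ≤ (∑ i ∈ I, ∑ j, (Vh - M) i j ^ 2) * s := sum_sq_mulVec_le _ _ _
      _ ≤ u ^ 2 * s := by gcongr; exact (sum_sq_rows_le_frobSq _ _).trans hVM
  have houtliers : ∑ i ∈ O, (Vh *ᵥ w) i ^ 2 ≤ (2 * O.card * c + 2 * u ^ 2) * s := by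
    refine (sum_sq_mulVec_le _ _ _).trans ?_
    gcongr
    calc ∑ i ∈ O, ∑ j, Vh i j ^ 2 ≤ ∑ i ∈ O, (2 * c + 2 * ∑ j, (Vh - W) i j ^ 2) :=
          sum_le_sum fun i hi => (sum_sq_row_le Vh W i).trans (by linarith [hW i hi])
      _ = 2 * O.card * c + 2 * ∑ i ∈ O, ∑ j, (Vh - W) i j ^ 2 := by
          rw [sum_add_distrib, sum_const, nsmul_eq_mul, mul_sum]; ring
      _ ≤ 2 * O.card * c + 2 * u ^ 2 := by linarith [sum_sq_rows_le_frobSq (Vh - W) O]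
  have htotal := sum_sq_mulVec_of_transpose_mul_self_eq_one hVh w
  rw [← hIO, sum_union hdisj] at htotal
  nlinarith [mul_lt_mul_of_pos_right hcond hs]

theorem stmt_9_general (n r m : ℕ)
    (I O : Finset (Fin n)) (hIO : I ∪ O = Finset.univ) (hdisj : Disjoint I O)
    (hm : O.card = m)
    (z : Fin n → Fin r)
    (Z : Matrix (Fin n) (Fin r) ℝ)
    (hZ : Z = Matrix.of (fun i k => if z i = k then (1 : ℝ) else 0))
    (ν : Matrix (Fin r) (Fin r) ℝ) (hν : νᵀ * ν = ((r : ℝ) / n) • (1 : Matrix (Fin r) (Fin r) ℝ))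
    (V : Matrix (Fin n) (Fin r) ℝ) (hV : V = Z * ν)
    (Vh : Matrix (Fin n) (Fin r) ℝ) (hVh : Vhᵀ * Vh = 1)
    (R : Matrix (Fin r) (Fin r) ℝ) (hR : Rᵀ * R = 1)
    (u : ℝ) (hu : frobNorm (V * R - Vh) ≤ u)
    (hcond : 3 * u ^ 2 + 2 * (m : ℝ) * r / n < 1)
    (Mstar : Matrix (Fin n) (Fin r) ℝ)
    (hMr : nDistinctRows Mstar ≤ r)
    (hMopt : ∀ M : Matrix (Fin n) (Fin r) ℝ, nDistinctRows M ≤ r →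
      frobSq (Vh - Mstar) ≤ frobSq (Vh - M)) :
    (I.image fun i => Mstar i).card = r := by
  have hVR : V * R = (ν * R).submatrix z id := by
    rw [hV, hZ, Matrix.mul_assoc, of_ite_mul_eq_submatrix]
  have hνR : (ν * R) * (ν * R)ᵀ = ((r : ℝ) / n) • 1 := by
    rw [transpose_mul, Matrix.mul_assoc, ← Matrix.mul_assoc R, mul_eq_one_comm.mp hR,
      Matrix.one_mul, mul_transpose_eq_smul_one_of_transpose_mul hν]
  have hrow : ∀ i, ∑ j, (V * R) i j ^ 2 = (r : ℝ) / n := fun i => by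
    rw [hVR]
    exact sum_sq_row_eq_of_mul_transpose_eq_smul_one hνR (z i)
  have hfit : frobSq (Vh - V * R) ≤ u ^ 2 := by
    rw [frobSq_sub_comm]
    exact frobSq_le_sq_of_frobNorm_le hu
  have hopt : frobSq (Vh - Mstar) ≤ u ^ 2 :=
    (hMopt _ (hVR ▸ nDistinctRows_submatrix_le _ _)).trans hfit
  refine le_antisymm ((card_le_card (image_subset_image (subset_univ I))).trans hMr) ?_
  refine le_card_image_rows_of_frobSq_le hIO hdisj hVh (c := r / n) (fun i _ => (hrow i).le)
    hfit hopt ?_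
  rw [hm]
  convert hcond using 2
  ring

/-- the k-means step produces exactly `r` inlier clusters: if
`{1,…,n} = I ∪ O` with `|O| = m`, `Z` is the membership matrix of a partition into `r`
clusters of size `n/r` each meeting `I`, `νᵀν = (r/n)·I_r`, `V = Zν`, `V̂ᵀV̂ = I_r`, `R` is
orthogonal with `‖VR − V̂‖_F ≤ u`, and `3u² + 2mr/n < 1`, then every minimizer `M*` of
`‖V̂ − M‖_F²` over matrices with at most `r` distinct rows has exactly `r` distinct rows
among the rows indexed by `I`. -/
theorem stmt_9 (n r m : ℕ) (hdvd : r ∣ n)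
    (I O : Finset (Fin n)) (hIO : I ∪ O = Finset.univ) (hdisj : Disjoint I O)
    (hm : O.card = m)
    (z : Fin n → Fin r)
    (hsize : ∀ k : Fin r, (Finset.univ.filter fun i => z i = k).card = n / r)
    (hmeet : ∀ k : Fin r, ∃ i ∈ I, z i = k)
    (Z : Matrix (Fin n) (Fin r) ℝ)
    (hZ : Z = Matrix.of (fun i k => if z i = k then (1 : ℝ) else 0))
    (ν : Matrix (Fin r) (Fin r) ℝ) (hν : νᵀ * ν = ((r : ℝ) / n) • (1 : Matrix (Fin r) (Fin r) ℝ))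
    (V : Matrix (Fin n) (Fin r) ℝ) (hV : V = Z * ν)
    (Vh : Matrix (Fin n) (Fin r) ℝ) (hVh : Vhᵀ * Vh = 1)
    (R : Matrix (Fin r) (Fin r) ℝ) (hR : Rᵀ * R = 1)
    (u : ℝ) (hu : frobNorm (V * R - Vh) ≤ u)
    (hcond : 3 * u ^ 2 + 2 * (m : ℝ) * r / n < 1)
    (Mstar : Matrix (Fin n) (Fin r) ℝ)
    (hMr : nDistinctRows Mstar ≤ r)
    (hMopt : ∀ M : Matrix (Fin n) (Fin r) ℝ, nDistinctRows M ≤ r →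
      frobSq (Vh - Mstar) ≤ frobSq (Vh - M)) :
    (I.image fun i => Mstar i).card = r :=
  stmt_9_general n r m I O hIO hdisj hm z Z hZ ν hν V hV Vh hVh R hR u hu hcond Mstar hMr hMopt
end

section
/- Lemma (misclustering count is controlled by eigenvector perturbation): let Z be the membership matrix of a partition of {1,…,n} into r clusters each of size n/r, let ν ∈ ℝ^{r×r} satisfy νᵀν = (r/n)·I_r, set U = Zν, and let R ∈ ℝ^{r×r} be orthogonal. Let Û ∈ ℝ^{n×r} be arbitrary, let C be a minimizer of ‖Û − M‖_F² over matrices M ∈ ℝ^{n×r} with at most r distinct rows, with rows c_1,…,c_n, and let I ⊆ {1,…,n}. Define M := {i ∈ I : ‖c_i − Z_i ν R‖ ≥ √(r/(2n))}. Then |M| ≤ (8n/r)·‖Û − UR‖_F². -/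
open Matrix

/-- misclustering count is controlled by eigenvector perturbation: with `Z`
the membership matrix of a partition into `r` clusters of size `n/r`, `νᵀν = (r/n)·I_r`,
`U = Zν`, `R` orthogonal, `Û` arbitrary, `C` a minimizer of `‖Û − M‖_F²` over matrices with
at most `r` distinct rows, and `I ⊆ {1,…,n}`, the set
`M = {i ∈ I : ‖c_i − Z_i ν R‖ ≥ √(r/(2n))}` satisfies `|M| ≤ (8n/r)·‖Û − UR‖_F²`. -/
theorem stmt_13 (n r : ℕ) (hdvd : r ∣ n)
    (z : Fin n → Fin r)
    (hsize : ∀ k : Fin r, (Finset.univ.filter fun i => z i = k).card = n / r)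
    (Z : Matrix (Fin n) (Fin r) ℝ)
    (hZ : Z = Matrix.of (fun i k => if z i = k then (1 : ℝ) else 0))
    (ν : Matrix (Fin r) (Fin r) ℝ)
    (hν : νᵀ * ν = ((r : ℝ) / n) • (1 : Matrix (Fin r) (Fin r) ℝ))
    (U : Matrix (Fin n) (Fin r) ℝ) (hU : U = Z * ν)
    (R : Matrix (Fin r) (Fin r) ℝ) (hR : Rᵀ * R = 1)
    (Uh : Matrix (Fin n) (Fin r) ℝ)
    (C : Matrix (Fin n) (Fin r) ℝ)
    (hCr : nDistinctRows C ≤ r)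
    (hCopt : ∀ M : Matrix (Fin n) (Fin r) ℝ, nDistinctRows M ≤ r →
      frobSq (Uh - C) ≤ frobSq (Uh - M))
    (I : Finset (Fin n))
    (Mis : Finset (Fin n))
    (hMis : Mis = I.filter fun i =>
      Real.sqrt ((r : ℝ) / (2 * n)) ≤ Real.sqrt (∑ a, (C i a - (Z * ν * R) i a) ^ 2)) :
    (Mis.card : ℝ) ≤ 8 * n / r * frobSq (Uh - U * R) := by

  rcases Nat.eq_zero_or_pos n with hn | hn
  · subst hn
    have hMe : Mis = ∅ := Finset.eq_empty_of_forall_notMem (fun i _ => i.elim0)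
    simp [hMe, frobSq]
  have hr : 0 < r := by
    rcases Nat.eq_zero_or_pos r with h | h
    · exfalso; subst h; have := Nat.zero_dvd.mp hdvd; omega
    · exact h
  have hZν : ∀ i, ∀ j, (Z * ν) i j = ν (z i) j := by
    intro i j
    simp [hZ, Matrix.mul_apply]
  have hrow : ∀ i, ∀ a, (U * R) i a = (ν * R) (z i) a := by
    intro i a
    rw [hU, Matrix.mul_apply, Matrix.mul_apply]
    exact Finset.sum_congr rfl (fun j _ => by rw [hZν])
  have hUR : nDistinctRows (U * R) ≤ r := by
    unfold nDistinctRows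
    calc (Finset.univ.image fun i => (U * R) i).card
        ≤ (Finset.univ.image fun k : Fin r => (ν * R) k).card := by
          apply Finset.card_le_card
          intro x hx
          simp only [Finset.mem_image, Finset.mem_univ, true_and] at hx ⊢
          obtain ⟨i, hi⟩ := hx
          exact ⟨z i, by rw [← hi]; funext a; rw [hrow]⟩
      _ ≤ Finset.univ.card := Finset.card_image_le
      _ = r := by simp
  have h1 : frobSq (Uh - C) ≤ frobSq (Uh - U * R) := hCopt _ hUR
  have h2 : frobSq (C - U * R) ≤ 4 * frobSq (Uh - U * R) := by
    have key : frobSq (C - U * R) ≤ 2 * frobSq (Uh - C) + 2 * frobSq (Uh - U * R) := by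
      unfold frobSq
      rw [Finset.mul_sum, Finset.mul_sum, ← Finset.sum_add_distrib]
      apply Finset.sum_le_sum; intro i _
      rw [Finset.mul_sum, Finset.mul_sum, ← Finset.sum_add_distrib]
      apply Finset.sum_le_sum; intro j _
      simp only [Matrix.sub_apply]
      nlinarith [sq_nonneg ((Uh i j - C i j) + (Uh i j - (U * R) i j))]
    linarith
  have hUReq : U * R = Z * ν * R := by rw [hU]
  have h3 : ∀ i ∈ Mis, (r : ℝ) / (2 * n) ≤ ∑ a, (C i a - (U * R) i a) ^ 2 := by
    intro i hi
    rw [hMis, Finset.mem_filter] at hi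
    have hs := hi.2
    have h0 : (0 : ℝ) ≤ (r : ℝ) / (2 * n) := by positivity
    have hS : (0 : ℝ) ≤ ∑ a, (C i a - (Z * ν * R) i a) ^ 2 := by positivity
    rw [hUReq]
    calc (r : ℝ) / (2 * n) = Real.sqrt ((r : ℝ) / (2 * n)) ^ 2 := (Real.sq_sqrt h0).symm
      _ ≤ Real.sqrt (∑ a, (C i a - (Z * ν * R) i a) ^ 2) ^ 2 := by
          apply pow_le_pow_left₀ (Real.sqrt_nonneg _) hs
      _ = ∑ a, (C i a - (Z * ν * R) i a) ^ 2 := Real.sq_sqrt hS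
  have h4 : (Mis.card : ℝ) * ((r : ℝ) / (2 * n)) ≤ frobSq (C - U * R) := by
    calc (Mis.card : ℝ) * ((r : ℝ) / (2 * n)) = ∑ _i ∈ Mis, (r : ℝ) / (2 * n) := by
          rw [Finset.sum_const, nsmul_eq_mul]
      _ ≤ ∑ i ∈ Mis, ∑ a, (C i a - (U * R) i a) ^ 2 := Finset.sum_le_sum h3
      _ ≤ ∑ i, ∑ a, (C i a - (U * R) i a) ^ 2 :=
          Finset.sum_le_sum_of_subset_of_nonneg (Finset.subset_univ _)
            (by intro i _ _; positivity)
      _ = frobSq (C - U * R) := by simp [frobSq]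
  have hrpos : (0 : ℝ) < (r : ℝ) / (2 * n) := by positivity
  have hfinal : (Mis.card : ℝ) ≤ 4 * frobSq (Uh - U * R) / ((r : ℝ) / (2 * n)) :=
    (le_div_iff₀ hrpos).mpr (by linarith)
  have heq : 4 * frobSq (Uh - U * R) / ((r : ℝ) / (2 * n)) = 8 * n / r * frobSq (Uh - U * R) := by
    have hn' : (n : ℝ) ≠ 0 := Nat.cast_ne_zero.mpr hn.ne'
    have hr' : (r : ℝ) ≠ 0 := Nat.cast_ne_zero.mpr hr.ne'
    field_simp
    ring
  linarith [heq ▸ hfinal]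
end
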